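/- Under the extensive interpretation of GCC protocols, in which the sets S given to agents at cut and choose nodes may contain pieces whose interiors include previously made cut points, there is a polynomial p such that every extended BC protocol whose tree has s nodes can be converted into a strongly envy-equivalent GCC protocol whose tree has at most p(s) nodes. -/

import Mathlib

/-! ## Cake, valuations, envy, abstract game forms -/

/-- A piece of cake: a finite list of subintervals of `[0,1]`, given by endpoint pairs. -/
abbrev Piece := List (ℝ × ℝ)

/-- A valuation function on subintervals of `[0,1]`: nonnegative, normalized,
additive and divisible. -/
structure CakeValuation where
  v : ℝ → ℝ → ℝ
  nonneg : ∀ a b, 0 ≤ a → a ≤ b → b ≤ 1 → 0 ≤ v a b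
  normalized : v 0 1 = 1
  additive : ∀ a b c, 0 ≤ a → a ≤ b → b ≤ c → c ≤ 1 → v a b + v b c = v a c
  divisible : ∀ a b, 0 ≤ a → a ≤ b → b ≤ 1 → ∀ lam : ℝ, 0 ≤ lam → lam ≤ 1 →
    ∃ c, a ≤ c ∧ c ≤ b ∧ v a c = lam * v a b

/-- The value of a piece of cake: the sum of the values of its intervals. -/
def pieceValue (V : CakeValuation) (P : Piece) : ℝ := (P.map fun q => V.v q.1 q.2).sum

/-- The envy of agent `i` towards agent `j` under allocation `A`. -/
def envy {n : ℕ} (V : CakeValuation) (A : Fin n → Piece) (i j : Fin n) : ℝ :=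
  max (pieceValue V (A j) - pieceValue V (A i)) 0

/-- An abstract cake-cutting protocol, viewed as an extensive-form game:
each agent has a type of strategies, and a strategy profile determines the
final allocation of pieces of cake to the agents. -/
structure GameForm (n : ℕ) where
  Strategy : Fin n → Type
  play : (∀ i, Strategy i) → Fin n → Piece

/-- Agent `i`, with private valuation `V`, can guarantee the envy bounds
`envy (i, j) ≤ M j` for all `j ∈ S` in protocol `P`: `i` has a strategy such that
against all strategies of the other agents the bounds hold. -/
def Guarantees {n : ℕ} (P : GameForm n) (i : Fin n) (S : Finset (Fin n))
    (M : Fin n → ℝ) (V : CakeValuation) : Prop :=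
  ∃ s : P.Strategy i, ∀ σ : ∀ j, P.Strategy j, σ i = s →
    ∀ j ∈ S, envy V (P.play σ) i j ≤ M j

/-- Two protocols are strongly envy-equivalent if every agent can guarantee the same
simultaneous envy bounds (with values in `[0,1]`, against any set `S` of other agents)
in both. -/
def StronglyEnvyEquiv {n : ℕ} (P P' : GameForm n) : Prop :=
  ∀ (i : Fin n) (S : Finset (Fin n)), i ∉ S →
    ∀ M : Fin n → ℝ, (∀ j ∈ S, M j ∈ Set.Icc (0 : ℝ) 1) →
      ∀ V : CakeValuation, (Guarantees P i S M V ↔ Guarantees P' i S M V)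

/-! ## Histories and strategies -/

/-- An execution history: the sequence of cut points made (`Sum.inl`)
and of discrete choices taken (`Sum.inr`) so far. -/
abbrev Hist := List (ℝ ⊕ ℕ)

/-- A strategy of an agent: as a function of the execution history, where to cut
at a node where the agent cuts, and which index to pick at a node where the agent
chooses. -/
structure BCStrategy where
  cutAt : Hist → ℝ
  chooseAt : Hist → ℕ

/-- The initial reference points of the cake `[0,1]`. -/
def initPts : Fin 2 → ℝ := fun t => if t = 0 then 0 else 1

/-- Turn a list of (interval, agent) pairs into an allocation. -/
def allocOf {n : ℕ} (L : List (ℝ × ℝ × Fin n)) : Fin n → Piece :=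
  fun a => (L.filter fun q => decide (q.2.2 = a)).map fun q => (q.1, q.2.1)

/-! ## Extended BC protocols -/

/-- An extended BC protocol tree over `n` agents, indexed by the number of cuts made
so far.  Cut points are referred to by their index of creation (index `0` is the point
`0`, index `1` is the point `1`, and index `t+2` is the `t`-th cut made).  At a `cut`
node the designated agent makes one cut anywhere between the two existing (possibly
non-consecutive) cut points `a` and `b`; at a `choose` node the designated agent
selects which child the execution proceeds to; a `leaf` allocates, for each listed
pair of existing cut points, the whole piece of cake lying between them to the listed
agent. -/
inductive ExtTree (n : ℕ) : ℕ → Type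
  | leaf {m : ℕ} (alloc : List (Fin (m + 2) × Fin (m + 2) × Fin n)) : ExtTree n m
  | cut {m : ℕ} (agent : Fin n) (a b : Fin (m + 2)) (child : ExtTree n (m + 1)) : ExtTree n m
  | choose {m : ℕ} (agent : Fin n) {k : ℕ} (children : Fin (k + 1) → ExtTree n m) : ExtTree n m

/-- Record a newly created cut point `y`. -/
def extendPt {m : ℕ} (p : Fin (m + 2) → ℝ) (y : ℝ) : Fin (m + 3) → ℝ :=
  fun t => if h : (t : ℕ) < m + 2 then p ⟨t, h⟩ else y

/-- Playing an extended BC protocol: given the cut points made so far (indexed by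
creation order), the execution history and a strategy profile, compute the final list
of (interval, agent) pairs. -/
def ExtTree.playAlloc {n : ℕ} : {m : ℕ} → ExtTree n m → (Fin (m + 2) → ℝ) → Hist →
    (Fin n → BCStrategy) → List (ℝ × ℝ × Fin n)
  | _, .leaf alloc, p, _, _ => alloc.map fun q => (p q.1, p q.2.1, q.2.2)
  | _, .cut i a b child, p, h, σ =>
      let lo := min (p a) (p b)
      let hi := max (p a) (p b)
      let y := max lo (min ((σ i).cutAt h) hi)
      child.playAlloc (extendPt p y) (h ++ [Sum.inl y]) σ
  | _, @ExtTree.choose _ _ i k children, p, h, σ =>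
      let t : Fin (k + 1) := ⟨(σ i).chooseAt h % (k + 1), Nat.mod_lt _ (Nat.succ_pos k)⟩
      (children t).playAlloc p (h ++ [Sum.inr (t : ℕ)]) σ

/-- A list of (interval, agent) pairs partitions the cake `[0,1]`: it can be reordered
into a sequence of intervals with nonnegative lengths, chained end to end from `0`
to `1`.  In particular, for each listed piece the left endpoint is at most the right
endpoint. -/
def PartitionsCake {n : ℕ} (L : List (ℝ × ℝ × Fin n)) : Prop :=
  ∃ L' : List (ℝ × ℝ × Fin n), L'.Perm L ∧
    (∀ q ∈ L', q.1 ≤ q.2.1) ∧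
    List.Chain' (fun q r => q.2.1 = r.1) L' ∧
    (L'.head?.map fun q => q.1) = some 0 ∧
    (L'.getLast?.map fun q => q.2.1) = some 1

/-- An extended BC protocol: an extended BC tree which is well formed, i.e. whatever
the agents do, at the leaf reached, each allocated piece lies between cut points
`x ≤ y` and the allocated pieces partition the entire cake. -/
structure ExtProtocol (n : ℕ) where
  tree : ExtTree n 0
  valid : ∀ σ : Fin n → BCStrategy, PartitionsCake (tree.playAlloc initPts [] σ)

/-- The extensive-form game determined by an extended BC protocol. -/
def ExtProtocol.toGame {n : ℕ} (E : ExtProtocol n) : GameForm n where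
  Strategy := fun _ => BCStrategy
  play := fun σ => allocOf (E.tree.playAlloc initPts [] σ)

/-- The number of nodes of an extended BC tree. -/
def ExtTree.size {n : ℕ} : {m : ℕ} → ExtTree n m → ℕ
  | _, .leaf _ => 1
  | _, .cut _ _ _ child => child.size + 1
  | _, @ExtTree.choose _ _ _ k children => (∑ t : Fin (k + 1), (children t).size) + 1

/-- An extended BC tree contains a cut node. -/
def ExtTree.hasCut {n : ℕ} : {m : ℕ} → ExtTree n m → Prop
  | _, .leaf _ => False
  | _, .cut _ _ _ _ => True
  | _, @ExtTree.choose _ _ _ _ children => ∃ t, (children t).hasCut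

/-- No choose node of the tree has a cut node among its descendants. -/
def ExtTree.cutsBeforeChoices {n : ℕ} : {m : ℕ} → ExtTree n m → Prop
  | _, .leaf _ => True
  | _, .cut _ _ _ child => child.cutsBeforeChoices
  | _, @ExtTree.choose _ _ _ _ children => ∀ t, ¬ (children t).hasCut

/-! ## Generalised cut and choose (GCC) protocols -/

/-- A generalised cut and choose (GCC) protocol tree over `n` agents, indexed by the
number of cuts made so far.  Cut points are referred to by their index of creation
(index `0` is the point `0`, index `1` is the point `1`, and index `t+2` is the `t`-th
cut made).  At a `cut` node, the designated agent is given the set `S` of intervals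
whose endpoints are existing cut points, picks one of them and makes a cut inside it;
at a `choose` node, the designated agent is given such a set `S`, picks one interval
of it and is allocated that interval; an `ifElse` node branches according to the
ordering of the previously made cut points and the execution history (the condition
is required to depend only on the relative order of the cut points, not on their
exact positions). -/
inductive GCCTree (n : ℕ) : ℕ → Type
  | leaf {m : ℕ} : GCCTree n m
  | cut {m : ℕ} (agent : Fin n) {k : ℕ} (S : Fin (k + 1) → Fin (m + 2) × Fin (m + 2))
      (child : GCCTree n (m + 1)) : GCCTree n m
  | choose {m : ℕ} (agent : Fin n) {k : ℕ} (S : Fin (k + 1) → Fin (m + 2) × Fin (m + 2))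
      (child : GCCTree n m) : GCCTree n m
  | ifElse {m : ℕ} {k : ℕ} (cond : (Fin (m + 2) → ℝ) → List ℕ → Fin (k + 1))
      (hcond : ∀ p q d, (∀ a b, p a ≤ p b ↔ q a ≤ q b) → cond p d = cond q d)
      (children : Fin (k + 1) → GCCTree n m) : GCCTree n m

/-- Playing a GCC protocol: given the cut points made so far (indexed by creation
order), the execution history, a strategy profile and the pieces allocated so far,
compute the final list of (interval, agent) pairs. -/
def GCCTree.play {n : ℕ} : {m : ℕ} → GCCTree n m → (Fin (m + 2) → ℝ) → Hist →
    (Fin n → BCStrategy) → List (ℝ × ℝ × Fin n) → List (ℝ × ℝ × Fin n)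
  | _, .leaf, _, _, _, acc => acc
  | _, @GCCTree.cut _ _ i k S child, p, h, σ, acc =>
      let idx : Fin (k + 1) := ⟨(σ i).chooseAt h % (k + 1), Nat.mod_lt _ (Nat.succ_pos k)⟩
      let lo := min (p (S idx).1) (p (S idx).2)
      let hi := max (p (S idx).1) (p (S idx).2)
      let y := max lo (min ((σ i).cutAt h) hi)
      child.play (extendPt p y) (h ++ [Sum.inr (idx : ℕ), Sum.inl y]) σ acc
  | _, @GCCTree.choose _ _ i k S child, p, h, σ, acc =>
      let idx : Fin (k + 1) := ⟨(σ i).chooseAt h % (k + 1), Nat.mod_lt _ (Nat.succ_pos k)⟩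
      child.play p (h ++ [Sum.inr (idx : ℕ)]) σ (acc ++ [(p (S idx).1, p (S idx).2, i)])
  | _, @GCCTree.ifElse _ _ k cond _ children, p, h, σ, acc =>
      (children (cond p (h.filterMap Sum.getRight?))).play p h σ acc

/-- The extensive-form game determined by a GCC protocol. -/
def GCCTree.toGame {n : ℕ} (t : GCCTree n 0) : GameForm n where
  Strategy := fun _ => BCStrategy
  play := fun σ => allocOf (t.play initPts [] σ [])

/-- The number of nodes of a GCC tree. -/
def GCCTree.size {n : ℕ} : {m : ℕ} → GCCTree n m → ℕ
  | _, .leaf => 1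
  | _, .cut _ _ child => child.size + 1
  | _, .choose _ _ child => child.size + 1
  | _, @GCCTree.ifElse _ _ k _ _ children => (∑ t : Fin (k + 1), (children t).size) + 1


/-! ## Auxiliary development for the proof -/

/-- The value of a single listed piece to agent `a` under valuation `V`. -/
def vfun {n : ℕ} (V : CakeValuation) (a : Fin n) (q : ℝ × ℝ × Fin n) : ℝ :=
  if q.2.2 = a then V.v q.1 q.2.1 else 0

lemma pieceValue_allocOf {n : ℕ} (V : CakeValuation) (a : Fin n) (L : List (ℝ × ℝ × Fin n)) :
    pieceValue V (allocOf L a) = (L.map (vfun V a)).sum := by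
  induction L with
  | nil => simp [pieceValue, allocOf]
  | cons q t ih =>
    by_cases hq : q.2.2 = a
    · simp [pieceValue, allocOf, List.filter_cons, hq, vfun] at *
      exact ih
    · simp [pieceValue, allocOf, List.filter_cons, hq, vfun] at *
      exact ih

lemma v_self_zero (V : CakeValuation) {u : ℝ} (h0 : 0 ≤ u) (h1 : u ≤ 1) : V.v u u = 0 := by
  have := V.additive u u 1 h0 le_rfl h1 le_rfl
  linarith

/-! ### Counting occurrences (with a fixed, instance-independent definition) -/

/-- Number of occurrences of `x` in `l`. -/
def cnt {α : Type*} [DecidableEq α] (x : α) (l : List α) : ℕ :=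
  (l.filter fun y => decide (y = x)).length

lemma cnt_nil {α : Type*} [DecidableEq α] (x : α) : cnt x [] = 0 := rfl

lemma cnt_cons {α : Type*} [DecidableEq α] (x a : α) (l : List α) :
    cnt x (a :: l) = cnt x l + if a = x then 1 else 0 := by
  by_cases h : a = x
  · simp [cnt, List.filter_cons, h]
  · simp [cnt, List.filter_cons, h]

lemma cnt_pos_iff {α : Type*} [DecidableEq α] {x : α} {l : List α} :
    1 ≤ cnt x l ↔ x ∈ l := by
  induction l with
  | nil => simp [cnt]
  | cons a t ih =>
    rw [cnt_cons]
    by_cases h : a = x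
    · subst h; simp
    · simp only [if_neg h, Nat.add_zero, ih, List.mem_cons]
      constructor
      · exact Or.inr
      · rintro (h' | h')
        · exact absurd h'.symm h
        · exact h'

lemma cnt_perm {α : Type*} [DecidableEq α] {l₁ l₂ : List α} (h : l₁.Perm l₂) (x : α) :
    cnt x l₁ = cnt x l₂ :=
  (h.filter _).length_eq

lemma cnt_map_le {α β : Type*} [DecidableEq α] [DecidableEq β] (f : α → β) (l : List α)
    (x : α) : cnt x l ≤ cnt (f x) (l.map f) := by
  induction l with
  | nil => simp [cnt]
  | cons a t ih =>
    rw [List.map_cons, cnt_cons, cnt_cons]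
    rcases eq_or_ne a x with h | h
    · subst h
      rw [if_pos rfl, if_pos rfl]
      omega
    · rw [if_neg h]
      split <;> omega

lemma sum_map_dedup {α : Type*} [DecidableEq α] (F : α → ℝ) :
    ∀ l : List α, (∀ x, 2 ≤ cnt x l → F x = 0) →
      ((l.dedup).map F).sum = (l.map F).sum := by
  intro l
  induction l with
  | nil => simp
  | cons a t ih =>
    intro H
    have Ht : ∀ x, 2 ≤ cnt x t → F x = 0 := by
      intro x hx
      apply H x
      rw [cnt_cons]
      omega
    by_cases hat : a ∈ t
    · rw [List.dedup_cons_of_mem hat]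
      have ha : F a = 0 := by
        apply H a
        have h1 : 1 ≤ cnt a t := cnt_pos_iff.mpr hat
        rw [cnt_cons, if_pos rfl]
        omega
      rw [ih Ht]
      simp [ha]
    · rw [List.dedup_cons_of_notMem hat]
      simp only [List.map_cons, List.sum_cons]
      rw [ih Ht]

/-! ### Chains -/

/-- `L` is a chain of nonnegative pieces from `a` to `b`. -/
def ChainFrom {n : ℕ} : ℝ → List (ℝ × ℝ × Fin n) → ℝ → Prop
  | a, [], b => a = b
  | a, q :: t, b => q.1 = a ∧ a ≤ q.2.1 ∧ ChainFrom q.2.1 t b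

lemma chainFrom_of {n : ℕ} :
    ∀ (L : List (ℝ × ℝ × Fin n)) (a b : ℝ), (∀ q ∈ L, q.1 ≤ q.2.1) →
      List.Chain' (fun q r => q.2.1 = r.1) L →
      (L.head?.map fun q => q.1) = some a → (L.getLast?.map fun q => q.2.1) = some b →
      ChainFrom a L b := by
  intro L
  induction L with
  | nil => intro a b _ _ hh; simp at hh
  | cons q t ih =>
    intro a b hne hch hh hl
    simp only [List.head?_cons, Option.map_some] at hh
    have hq1 : q.1 = a := by injection hh
    cases t with
    | nil =>
      simp only [List.getLast?_singleton, Option.map_some] at hl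
      have hq2 : q.2.1 = b := by injection hl
      exact ⟨hq1, hq1 ▸ (hne q (by simp)), by simpa [ChainFrom] using hq2⟩
    | cons r t' =>
      unfold List.Chain' at hch
      rw [List.isChain_cons_cons] at hch
      refine ⟨hq1, hq1 ▸ (hne q (by simp)), ?_⟩
      apply ih q.2.1 b (fun x hx => hne x (by simp [hx])) hch.2
      · simp [hch.1]
      · rw [← hl]
        rw [List.getLast?_cons_cons]

lemma chainFrom_bounds {n : ℕ} :
    ∀ (L : List (ℝ × ℝ × Fin n)) (a b : ℝ), ChainFrom a L b →
      a ≤ b ∧ ∀ q ∈ L, a ≤ q.1 ∧ q.1 ≤ q.2.1 ∧ q.2.1 ≤ b := by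
  intro L
  induction L with
  | nil => intro a b h; exact ⟨le_of_eq h, by simp⟩
  | cons q t ih =>
    intro a b h
    obtain ⟨hq1, hle, hc⟩ := h
    obtain ⟨hab, hmem⟩ := ih q.2.1 b hc
    constructor
    · calc a ≤ q.2.1 := hle
        _ ≤ b := hab
    · intro r hr
      rcases List.mem_cons.mp hr with h1 | h2
      · subst h1; exact ⟨le_of_eq hq1.symm, hq1 ▸ hle, hab⟩
      · obtain ⟨h1, h2, h3⟩ := hmem r h2
        exact ⟨le_trans hle h1, h2, h3⟩

lemma chainFrom_dup {n : ℕ} :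
    ∀ (L : List (ℝ × ℝ × Fin n)) (a b : ℝ) (x : ℝ × ℝ × Fin n), ChainFrom a L b →
      2 ≤ cnt x L → x.1 = x.2.1 := by
  intro L
  induction L with
  | nil => intro a b x _ hc; simp [cnt] at hc
  | cons q t ih =>
    intro a b x h hc
    obtain ⟨hq1, hle, hch⟩ := h
    rw [cnt_cons] at hc
    by_cases hx : q = x
    · subst hx
      rw [if_pos rfl] at hc
      have hmem : q ∈ t := cnt_pos_iff.mp (by omega)
      obtain ⟨_, hb⟩ := chainFrom_bounds t q.2.1 b hch
      obtain ⟨h1, h2, _⟩ := hb q hmem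
      linarith
    · rw [if_neg hx] at hc
      exact ih q.2.1 b x hch (by omega)

lemma dup_val_zero {n : ℕ} (M : List (ℝ × ℝ × Fin n))
    (hp : PartitionsCake M) (V : CakeValuation) (a : Fin n) :
    ∀ x, 2 ≤ cnt x M → vfun V a x = 0 := by
  obtain ⟨L', hperm, hne, hch, hh, hl⟩ := hp
  intro x hx
  have hcount : 2 ≤ cnt x L' := by rw [cnt_perm hperm]; exact hx
  have hchain : ChainFrom 0 L' 1 := chainFrom_of L' 0 1 hne hch hh hl
  have hdeg : x.1 = x.2.1 := chainFrom_dup L' 0 1 x hchain hcount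
  have hmem : x ∈ L' := cnt_pos_iff.mp (by omega)
  obtain ⟨_, hb⟩ := chainFrom_bounds L' 0 1 hchain
  obtain ⟨h1, h2, h3⟩ := hb x hmem
  unfold vfun
  split
  · rw [← hdeg]; exact v_self_zero V h1 (by linarith)
  · rfl

/-! ### History translation -/

/-- Embed an extended-BC history into the corresponding GCC history:
insert a `Sum.inr 0` (the forced trivial interval choice) before each cut. -/
def fh : Hist → Hist
  | [] => []
  | Sum.inl y :: t => Sum.inr 0 :: Sum.inl y :: fh t
  | Sum.inr k :: t => Sum.inr k :: fh t

/-- Left inverse of `fh`. -/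
def gh : Hist → Hist
  | [] => []
  | Sum.inl y :: t => Sum.inl y :: gh t
  | [Sum.inr k] => [Sum.inr k]
  | Sum.inr _ :: Sum.inl y :: t => Sum.inl y :: gh t
  | Sum.inr k :: Sum.inr k' :: t => Sum.inr k :: gh (Sum.inr k' :: t)

lemma gh_fh : ∀ h : Hist, gh (fh h) = h := by
  intro h
  induction h with
  | nil => rfl
  | cons x t ih =>
    cases x with
    | inl y => simp only [fh, gh, ih]
    | inr k =>
      cases t with
      | nil => rfl
      | cons x' t' =>
        cases x' with
        | inl y' => simp only [fh, gh] at ih ⊢; rw [ih]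
        | inr k' => simp only [fh, gh] at ih ⊢; rw [ih]

lemma fh_append_inl (h : Hist) (y : ℝ) :
    fh (h ++ [Sum.inl y]) = fh h ++ [Sum.inr 0, Sum.inl y] := by
  induction h with
  | nil => rfl
  | cons x t ih => cases x <;> simp only [List.cons_append, List.append_eq, fh, ih]

lemma fh_append_inr (h : Hist) (k : ℕ) :
    fh (h ++ [Sum.inr k]) = fh h ++ [Sum.inr k] := by
  induction h with
  | nil => rfl
  | cons x t ih => cases x <;> simp only [List.cons_append, List.append_eq, fh, ih]

/-! ### The translation -/

/-- Allocate all listed pieces, through forced `choose` nodes. -/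
def trAlloc {n m : ℕ} : List (Fin (m + 2) × Fin (m + 2) × Fin n) → GCCTree n m
  | [] => .leaf
  | q :: t => .choose q.2.2 (fun _ : Fin 1 => (q.1, q.2.1)) (trAlloc t)

/-- The translation of an extended BC tree into a GCC tree. -/
def ExtTree.tr {n : ℕ} : {m : ℕ} → ExtTree n m → GCCTree n m
  | _, .leaf alloc => trAlloc alloc.dedup
  | _, .cut i a b child => .cut i (fun _ : Fin 1 => (a, b)) child.tr
  | _, @ExtTree.choose _ _ i k children =>
      .choose i (fun _ : Fin (k + 1) => ((0 : Fin _), (0 : Fin _)))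
        (.ifElse (fun _ d => ⟨(d.getLast?.getD 0) % (k + 1), Nat.mod_lt _ (Nat.succ_pos k)⟩)
          (fun _ _ _ _ => rfl)
          (fun t => (children t).tr))

lemma trAlloc_play {n m : ℕ} :
    ∀ (l : List (Fin (m + 2) × Fin (m + 2) × Fin n)) (p : Fin (m + 2) → ℝ) (h : Hist)
      (σ : Fin n → BCStrategy) (acc : List (ℝ × ℝ × Fin n)),
      (trAlloc l).play p h σ acc = acc ++ l.map (fun q => (p q.1, p q.2.1, q.2.2)) := by
  intro l
  induction l with
  | nil => intro p h σ acc; simp [trAlloc, GCCTree.play]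
  | cons q t ih =>
    intro p h σ acc
    simp [trAlloc, GCCTree.play, ih]

lemma extendPt_zero {m : ℕ} (p : Fin (m + 2) → ℝ) (y : ℝ) : extendPt p y 0 = p 0 := by
  simp [extendPt]

/-- Main correspondence between plays of the translation and of the original. -/
lemma play_tr {n : ℕ} (σ σ' : Fin n → BCStrategy)
    (Hc : ∀ j hh, (σ j).cutAt hh = (σ' j).cutAt (fh hh))
    (Hch : ∀ j hh, (σ j).chooseAt hh = (σ' j).chooseAt (fh hh)) :
    ∀ {m : ℕ} (T : ExtTree n m) (p : Fin (m + 2) → ℝ) (h : Hist)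
      (acc : List (ℝ × ℝ × Fin n)),
      ∃ D L : List (ℝ × ℝ × Fin n),
        T.tr.play p (fh h) σ' acc = acc ++ D ++ L ∧
        (∀ q ∈ D, q.1 = p 0 ∧ q.2.1 = p 0) ∧
        (∀ (V : CakeValuation) (a : Fin n),
          (∀ x, 2 ≤ cnt x (T.playAlloc p h σ) → vfun V a x = 0) →
          (L.map (vfun V a)).sum = ((T.playAlloc p h σ).map (vfun V a)).sum) := by
  intro m T
  induction T with
  | leaf alloc =>
    intro p h acc
    refine ⟨[], alloc.dedup.map (fun q => (p q.1, p q.2.1, q.2.2)), ?_, by simp, ?_⟩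
    · simp [ExtTree.tr, trAlloc_play]
    · intro V a H
      simp only [ExtTree.playAlloc] at H ⊢
      rw [List.map_map, List.map_map]
      apply sum_map_dedup
      intro x hx
      apply H
      exact le_trans hx (cnt_map_le (fun q => (p q.1, p q.2.1, q.2.2)) alloc x)
  | cut i a b child ih =>
    intro p h acc
    simp only [ExtTree.tr, GCCTree.play, ExtTree.playAlloc]
    rw [← Hc i h]
    set y := max (min (p a) (p b)) (min ((σ i).cutAt h) (max (p a) (p b))) with hy
    obtain ⟨D, L, h1, h2, h3⟩ := ih (extendPt p y) (h ++ [Sum.inl y]) acc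
    refine ⟨D, L, ?_, ?_, ?_⟩
    · rw [← h1, fh_append_inl]
      congr 2
      simp [Nat.mod_one]
    · intro q hq
      obtain ⟨hq1, hq2⟩ := h2 q hq
      rw [extendPt_zero] at hq1 hq2
      exact ⟨hq1, hq2⟩
    · exact h3
  | choose i children ih =>
    rename_i mm kk
    intro p h acc
    simp only [ExtTree.tr, GCCTree.play, ExtTree.playAlloc]
    have hcc : (σ' i).chooseAt (fh h) = (σ i).chooseAt h := (Hch i h).symm
    simp only [hcc]
    have hcondeq :
        (⟨(((fh h ++ [Sum.inr ((σ i).chooseAt h % (kk + 1))]).filterMap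
              Sum.getRight?).getLast?.getD 0) % (kk + 1),
          Nat.mod_lt _ (Nat.succ_pos kk)⟩ : Fin (kk + 1)) =
          ⟨(σ i).chooseAt h % (kk + 1), Nat.mod_lt _ (Nat.succ_pos kk)⟩ := by
      apply Fin.ext
      have hfm : List.filterMap Sum.getRight?
          [(Sum.inr ((σ i).chooseAt h % (kk + 1)) : ℝ ⊕ ℕ)] =
          [(σ i).chooseAt h % (kk + 1)] := rfl
      simp only [List.filterMap_append, hfm]
      rw [List.getLast?_concat]
      simp [Nat.mod_eq_of_lt (Nat.mod_lt ((σ i).chooseAt h) (Nat.succ_pos kk))]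
    simp only [hcondeq]
    obtain ⟨D, L, h1, h2, h3⟩ :=
      ih ⟨(σ i).chooseAt h % (kk + 1), Nat.mod_lt _ (Nat.succ_pos kk)⟩ p
        (h ++ [Sum.inr ((σ i).chooseAt h % (kk + 1))]) (acc ++ [(p 0, p 0, i)])
    refine ⟨(p 0, p 0, i) :: D, L, ?_, ?_, h3⟩
    · rw [fh_append_inr] at h1
      rw [h1]
      simp
    · intro q hq
      rcases List.mem_cons.mp hq with h | h
      · subst h; exact ⟨rfl, rfl⟩
      · exact h2 q h

/-! ### Size bound for the translation -/

lemma trAlloc_size {n m : ℕ} :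
    ∀ l : List (Fin (m + 2) × Fin (m + 2) × Fin n), (trAlloc l).size = l.length + 1 := by
  intro l
  induction l with
  | nil => rfl
  | cons q t ih => simp [trAlloc, GCCTree.size, ih]

lemma tr_size {n : ℕ} :
    ∀ {m : ℕ} (T : ExtTree n m),
      T.tr.size ≤ T.size * (n * (m + T.size + 2) ^ 2 + 2) := by
  intro m T
  induction T with
  | leaf alloc =>
    rename_i mm
    have hlen : alloc.dedup.length ≤ (mm + 2) * ((mm + 2) * n) := by
      simpa using (alloc.nodup_dedup).length_le_card
    have h1 : (mm + 2) * ((mm + 2) * n) ≤ n * (mm + 1 + 2) ^ 2 := by nlinarith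
    simp only [ExtTree.tr, ExtTree.size, trAlloc_size, one_mul]
    linarith
  | cut i a b child ih =>
    rename_i mm
    simp only [ExtTree.tr, ExtTree.size, GCCTree.size]
    have he : mm + 1 + child.size + 2 = mm + (child.size + 1) + 2 := by omega
    rw [he] at ih
    have hX2 : 2 ≤ n * (mm + (child.size + 1) + 2) ^ 2 + 2 := Nat.le_add_left 2 _
    calc child.tr.size + 1
        ≤ child.size * (n * (mm + (child.size + 1) + 2) ^ 2 + 2) + 1 :=
          Nat.add_le_add_right ih 1
      _ ≤ child.size * (n * (mm + (child.size + 1) + 2) ^ 2 + 2) +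
            (n * (mm + (child.size + 1) + 2) ^ 2 + 2) :=
          Nat.add_le_add_left (le_trans one_le_two hX2) _
      _ = (child.size + 1) * (n * (mm + (child.size + 1) + 2) ^ 2 + 2) := by ring
  | choose i children ih =>
    rename_i mm kk
    simp only [ExtTree.tr, ExtTree.size, GCCTree.size]
    have hX2 : 2 ≤ n * (mm + ((∑ t, (children t).size) + 1) + 2) ^ 2 + 2 :=
      Nat.le_add_left 2 _
    have hbt : ∀ t, (children t).tr.size ≤
        (children t).size * (n * (mm + ((∑ t, (children t).size) + 1) + 2) ^ 2 + 2) := by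
      intro t
      refine le_trans (ih t) ?_
      apply Nat.mul_le_mul_left
      have hct : (children t).size ≤ ∑ t, (children t).size :=
        Finset.single_le_sum (f := fun t => (children t).size)
          (fun _ _ => Nat.zero_le _) (Finset.mem_univ t)
      have hin : n * (mm + (children t).size + 2) ^ 2 ≤
          n * (mm + ((∑ t, (children t).size) + 1) + 2) ^ 2 :=
        Nat.mul_le_mul_left _ (Nat.pow_le_pow_left (by omega) 2)
      linarith
    have hsum : (∑ t, (children t).tr.size) ≤
        ∑ t, (children t).size * (n * (mm + ((∑ t, (children t).size) + 1) + 2) ^ 2 + 2) :=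
      Finset.sum_le_sum (fun t _ => hbt t)
    rw [← Finset.sum_mul] at hsum
    have hexp : ((∑ t, (children t).size) + 1) *
          (n * (mm + ((∑ t, (children t).size) + 1) + 2) ^ 2 + 2)
        = (∑ t, (children t).size) *
            (n * (mm + ((∑ t, (children t).size) + 1) + 2) ^ 2 + 2)
          + (n * (mm + ((∑ t, (children t).size) + 1) + 2) ^ 2 + 2) := by ring
    linarith

/-! ### Value equality and envy equivalence -/

lemma play_values {n : ℕ} (E : ExtProtocol n) (σ σ' : Fin n → BCStrategy)
    (Hc : ∀ j hh, (σ j).cutAt hh = (σ' j).cutAt (fh hh))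
    (Hch : ∀ j hh, (σ j).chooseAt hh = (σ' j).chooseAt (fh hh))
    (V : CakeValuation) (a : Fin n) :
    pieceValue V ((E.tree.tr.toGame).play σ' a) = pieceValue V (E.toGame.play σ a) := by
  obtain ⟨D, L, h1, h2, h3⟩ := play_tr σ σ' Hc Hch E.tree initPts [] []
  have hfh : fh ([] : Hist) = [] := rfl
  rw [hfh] at h1
  have hDzero : ∀ (V' : CakeValuation) (a' : Fin n), (D.map (vfun V' a')).sum = 0 := by
    intro V' a'
    apply List.sum_eq_zero
    intro x hx
    obtain ⟨q, hq, hxq⟩ := List.mem_map.mp hx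
    obtain ⟨hq1, hq2⟩ := h2 q hq
    have hinit : initPts 0 = 0 := by simp [initPts]
    rw [hinit] at hq1 hq2
    rw [← hxq]
    unfold vfun
    split
    · rw [hq1, hq2]; exact v_self_zero V' le_rfl zero_le_one
    · rfl
  have hLsum := h3 V a (dup_val_zero _ (E.valid σ) V a)
  show pieceValue V (allocOf (E.tree.tr.play initPts [] σ' []) a) =
    pieceValue V (allocOf (E.tree.playAlloc initPts [] σ) a)
  rw [h1, pieceValue_allocOf, pieceValue_allocOf]
  simp only [List.nil_append, List.map_append, List.sum_append]
  rw [hDzero, hLsum, zero_add]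

lemma guarantees_transfer {n : ℕ} (E : ExtProtocol n) (i : Fin n) (S : Finset (Fin n))
    (M : Fin n → ℝ) (V : CakeValuation) :
    Guarantees E.toGame i S M V ↔ Guarantees (E.tree.tr.toGame) i S M V := by
  constructor
  · rintro ⟨s, hs⟩
    refine ⟨⟨fun h' => s.cutAt (gh h'), fun h' => s.chooseAt (gh h')⟩, ?_⟩
    intro σ' hσ' j hj
    set σ : ∀ _ : Fin n, BCStrategy := fun j' =>
      if j' = i then s else
        ⟨fun h => (σ' j').cutAt (fh h), fun h => (σ' j').chooseAt (fh h)⟩ with hσ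
    have Hc : ∀ j hh, (σ j).cutAt hh = (σ' j).cutAt (fh hh) := by
      intro j hh
      by_cases hji : j = i
      · subst hji
        simp only [hσ, if_pos rfl, hσ', ↓reduceIte]
        rw [gh_fh]
      · simp only [hσ, if_neg hji, hji, ↓reduceIte]
    have Hch : ∀ j hh, (σ j).chooseAt hh = (σ' j).chooseAt (fh hh) := by
      intro j hh
      by_cases hji : j = i
      · subst hji
        simp only [hσ, if_pos rfl, hσ', ↓reduceIte]
        rw [gh_fh]
      · simp only [hσ, if_neg hji, hji, ↓reduceIte]
    have hEnvy := hs σ (by simp [hσ]) j hj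
    have hv1 := play_values E σ σ' Hc Hch V j
    have hv2 := play_values E σ σ' Hc Hch V i
    unfold envy at hEnvy ⊢
    rw [hv1, hv2]
    exact hEnvy
  · rintro ⟨s', hs'⟩
    refine ⟨⟨fun h => s'.cutAt (fh h), fun h => s'.chooseAt (fh h)⟩, ?_⟩
    intro σ hσi j hj
    set σ' : ∀ _ : Fin n, BCStrategy := fun j' =>
      if j' = i then s' else
        ⟨fun h' => (σ j').cutAt (gh h'), fun h' => (σ j').chooseAt (gh h')⟩ with hσ'
    have Hc : ∀ j hh, (σ j).cutAt hh = (σ' j).cutAt (fh hh) := by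
      intro j hh
      by_cases hji : j = i
      · subst hji
        simp only [hσ', if_pos rfl, hσi, ↓reduceIte]
      · simp only [hσ', if_neg hji, gh_fh, hji, ↓reduceIte]
    have Hch : ∀ j hh, (σ j).chooseAt hh = (σ' j).chooseAt (fh hh) := by
      intro j hh
      by_cases hji : j = i
      · subst hji
        simp only [hσ', if_pos rfl, hσi, ↓reduceIte]
      · simp only [hσ', if_neg hji, gh_fh, hji, ↓reduceIte]
    have hEnvy := hs' σ' (by simp [hσ']) j hj
    have hv1 := play_values E σ σ' Hc Hch V j
    have hv2 := play_values E σ σ' Hc Hch V i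
    unfold envy at hEnvy ⊢
    rw [← hv1, ← hv2]
    exact hEnvy

/-- **Theorem.** (Extensive interpretation of GCC protocols, in which the intervals
given to agents at cut and choose nodes may contain previously made cut points in
their interiors.)  There is a polynomial `p` such that every extended BC protocol
whose tree has `s` nodes can be converted into a strongly envy-equivalent GCC
protocol whose tree has at most `p s` nodes. -/
theorem ext_to_gcc_polynomial (n : ℕ) :
    ∃ p : Polynomial ℕ, ∀ E : ExtProtocol n, ∃ G : GCCTree n 0,
      StronglyEnvyEquiv E.toGame G.toGame ∧ G.size ≤ p.eval E.tree.size := by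
  refine ⟨Polynomial.X * (Polynomial.C n * (Polynomial.X + Polynomial.C 2) ^ 2 + Polynomial.C 2),
    fun E => ⟨E.tree.tr, ?_, ?_⟩⟩
  · intro i S _ M _ V
    exact guarantees_transfer E i S M V
  · have := tr_size E.tree
    simpa using this
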